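/- Let (G,f) = der_θ(G,·) with θ^{n-1} = id, u an idempotent of (G,f), and δ(i,u) = θ(u)···θ^i(u). Then for all i, j ∈ ℤ_{n-1}: θ^{i+1}(δ(j,u)) = θ^{i+1}(u⁻¹)·δ(i,u)⁻¹·δ(i+j+1, u), where indices are taken modulo n-1. -/
import Mathlib


/-- `δ(i,u) = θ(u)·θ²(u)⋯θ^i(u)`, with `δ(0,u) = e`. -/
def delta {G : Type*} [Group G] (θ : MulAut G) (k : ℕ) (u : G) : G :=
  (List.ofFn fun t : Fin k => (θ ^ ((t : ℕ) + 1)) u).prod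

lemma delta_zero {G : Type*} [Group G] (θ : MulAut G) (u : G) : delta θ 0 u = 1 := by
  simp [delta]

lemma delta_succ {G : Type*} [Group G] (θ : MulAut G) (k : ℕ) (u : G) :
    delta θ (k + 1) u = delta θ k u * (θ ^ (k + 1)) u := by
  unfold delta
  rw [List.ofFn_succ', List.concat_eq_append, List.prod_append, List.prod_singleton]
  simp

lemma delta_add {G : Type*} [Group G] (θ : MulAut G) (a b : ℕ) (u : G) :
    delta θ (a + b) u = delta θ a u * (θ ^ a) (delta θ b u) := by
  induction b with
  | zero => simp [delta_zero]
  | succ b ih =>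
      rw [← Nat.add_assoc, delta_succ, ih, delta_succ, map_mul, mul_assoc]
      congr 2
      rw [show a + b + 1 = a + (b + 1) by omega, pow_add, MulAut.mul_apply]

/-- Let `θ^{n-1} = id` and let `u` be an idempotent of `der_θ(G,·)`, i.e.
`u·θ(u)⋯θ^{n-2}(u)·u = u`.  Then for all `i, j ∈ ℤ_{n-1}`:
`θ^{i+1}(δ(j,u)) = θ^{i+1}(u⁻¹)·δ(i,u)⁻¹·δ(i+j+1, u)`, indices mod `n-1`. -/
theorem delta_cocycle {G : Type*} [Group G] (n : ℕ) (hn : 2 ≤ n)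
    (θ : MulAut G) (hθ : θ ^ (n - 1) = 1)
    (u : G) (hidem : u * delta θ (n - 2) u * u = u) :
    ∀ i j : ZMod (n - 1),
      (θ ^ (i.val + 1)) (delta θ j.val u) =
        (θ ^ (i.val + 1)) u⁻¹ * (delta θ i.val u)⁻¹ *
          delta θ (i + j + 1 : ZMod (n - 1)).val u := by
  haveI : NeZero (n - 1) := ⟨by omega⟩
  set m := n - 1 with hm
  have hd2 : delta θ (n - 2) u = u⁻¹ := by
    have h1 : u * delta θ (n - 2) u = 1 :=
      mul_right_cancel (b := u) (by rw [one_mul]; exact hidem)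
    exact (inv_eq_of_mul_eq_one_right h1).symm
  have hdm : delta θ m u = 1 := by
    rw [show m = (n - 2) + 1 by omega, delta_succ, hd2, show (n-2)+1 = m by omega, hθ]
    simp
  have hmod : ∀ k : ℕ, delta θ k u = delta θ (k % m) u := by
    have hper : ∀ q r : ℕ, delta θ (r + m * q) u = delta θ r u := by
      intro q
      induction q with
      | zero => simp
      | succ q ih =>
          intro r
          rw [show r + m * (q + 1) = (r + m * q) + m by ring, delta_add, hdm]
          simp [ih r]
    intro k
    conv_lhs => rw [← Nat.mod_add_div k m]
    exact hper _ _
  intro i j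
  set a := i.val
  set b := j.val
  have hval : (i + j + 1 : ZMod m).val = (a + b + 1) % m := by
    have hij : (i + j + 1 : ZMod m) = ((a + b + 1 : ℕ) : ZMod m) := by
      push_cast
      rw [ZMod.natCast_val i, ZMod.natCast_val j, ZMod.cast_id, ZMod.cast_id]
    rw [hij, ZMod.val_natCast]
  rw [hval, ← hmod (a + b + 1),
    show a + b + 1 = (a + 1) + b by omega, delta_add, delta_succ, map_inv]
  group
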